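/- arXiv:0712.0152 — 2 statements merged into one kernel-verified Lean document; each statement's English description precedes it below -/
import Mathlib

section
/- Let n ≥ 1, let a < t be real numbers, let 0 < α ≤ 1, let L : ℝ × ℝⁿ × ℝⁿ × ℝⁿ → ℝ be of class C⁴, and let q : ℝ → ℝⁿ be of class C⁴ on [a,t]. Suppose that for every C⁴ function h : ℝ → ℝⁿ with h(a) = h(t) = 0 and h'(a) = h'(t) = 0, the function ε ↦ (1/Γ(α)) ∫_a^t L(θ, q(θ)+εh(θ), q'(θ)+εh'(θ), q''(θ)+εh''(θ)) (t−θ)^{α−1} dθ has derivative 0 at ε = 0. Then for every θ ∈ (a,t): ∂₂L − (d/dθ)∂₃L + (d²/dθ²)∂₄L = ((1−α)/(t−θ))·(∂₃L − 2(d/dθ)∂₄L) − ((1−α)(2−α)/(t−θ)²)·∂₄L, where each partial derivative of L is evaluated along (θ, q(θ), q'(θ), q''(θ)). -/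
/-!
Vary `q` in the direction `φ • v`, with `φ` a bump function supported in `(a, t)`. Since `q` is
`C⁴` up to the endpoints, its second-order jet stays in a compact set, so the derivative in `ε`
can be taken under the integral by dominated convergence; this gives the first variation
`∫ (⟪∂₂L, h⟫ + ⟪∂₃L, h'⟫ + ⟪∂₄L, h''⟫) w = 0` with weight `w θ = (t - θ) ^ (α - 1)`. Integrating
by parts twice and applying the fundamental lemma of the calculus of variations yields the
weighted Euler–Lagrange equation `w ∂₂L - (w ∂₃L)' + (w ∂₄L)'' = 0` on `(a, t)`. Expanding the
products with `w' / w = (1 - α) / (t - θ)` and `w'' / w = (1 - α) (2 - α) / (t - θ) ^ 2` and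
dividing by `w` gives the stated identity.
-/

open scoped RealInnerProductSpace ContDiff
open InnerProductSpace MeasureTheory Set Topology Filter

section FundamentalLemma

variable {a b : ℝ}

lemma IsCompact.exists_Ioo_subset_of_subset_Ioo {K : Set ℝ} (hK : IsCompact K)
    (hKab : K ⊆ Ioo a b) (hab : a < b) : ∃ c d, a < c ∧ c < d ∧ d < b ∧ K ⊆ Ioo c d := by
  rcases K.eq_empty_or_nonempty with rfl | hne
  · exact ⟨(2 * a + b) / 3, (a + 2 * b) / 3, by linarith, by linarith, by linarith,
      empty_subset _⟩
  obtain ⟨m, hmK, hm⟩ := hK.exists_isLeast hne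
  obtain ⟨M, hMK, hM⟩ := hK.exists_isGreatest hne
  obtain ⟨ham, -⟩ := hKab hmK
  obtain ⟨-, hMb⟩ := hKab hMK
  have hmM : m ≤ M := hm hMK
  exact ⟨(a + m) / 2, (M + b) / 2, by linarith, by linarith, by linarith,
    fun x hx => ⟨by linarith [hm hx], by linarith [hM hx]⟩⟩

theorem integral_second_order_test_eq_integral_mul {c d : ℝ} (hcd : c ≤ d) {φ : ℝ → ℝ}
    (hφ : ContDiff ℝ 2 φ) (hφc : φ c = 0) (hφ'c : deriv φ c = 0) (hφd : φ d = 0)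
    (hφ'd : deriv φ d = 0) {f₀ f₁ f₁' f₂ f₂' f₂'' : ℝ → ℝ} (hf₀ : ContinuousOn f₀ (Icc c d))
    (hf₁ : ∀ x ∈ Icc c d, HasDerivAt f₁ (f₁' x) x) (hf₁' : ContinuousOn f₁' (Icc c d))
    (hf₂ : ∀ x ∈ Icc c d, HasDerivAt f₂ (f₂' x) x)
    (hf₂' : ∀ x ∈ Icc c d, HasDerivAt f₂' (f₂'' x) x) (hf₂'' : ContinuousOn f₂'' (Icc c d)) :
    ∫ x in c..d, φ x * f₀ x + deriv φ x * f₁ x + deriv (deriv φ) x * f₂ x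
      = ∫ x in c..d, φ x * (f₀ x - f₁' x + f₂'' x) := by
  have hφ' : ContDiff ℝ 1 (deriv φ) := hφ.deriv'
  have hcont : ∀ {f f' : ℝ → ℝ}, (∀ x ∈ Icc c d, HasDerivAt f (f' x) x) →
      ContinuousOn f (Icc c d) := fun hf x hx => (hf x hx).continuousAt.continuousWithinAt
  have hT : IntervalIntegrable
      (fun x => φ x * f₀ x + deriv φ x * f₁ x + deriv (deriv φ) x * f₂ x) volume c d :=
    ContinuousOn.intervalIntegrable_of_Icc hcd <|
      ((hφ.continuous.continuousOn.mul hf₀).add (hφ'.continuous.continuousOn.mul (hcont hf₁))).add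
        (hφ'.continuous_deriv le_rfl |>.continuousOn.mul (hcont hf₂))
  have hφG : IntervalIntegrable (fun x => φ x * (f₀ x - f₁' x + f₂'' x)) volume c d :=
    (hφ.continuous.continuousOn.mul ((hf₀.sub hf₁').add hf₂'')).intervalIntegrable_of_Icc hcd
  have hΨ : ∀ x ∈ uIcc c d,
      HasDerivAt (fun x => φ x * f₁ x + deriv φ x * f₂ x - φ x * f₂' x)
        ((φ x * f₀ x + deriv φ x * f₁ x + deriv (deriv φ) x * f₂ x)
          - φ x * (f₀ x - f₁' x + f₂'' x)) x := by
    intro x hx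
    rw [uIcc_of_le hcd] at hx
    have hφx := (hφ.differentiable (by simp) x).hasDerivAt
    have hφ'x := (hφ'.differentiable (by simp) x).hasDerivAt
    exact ((hφx.mul (hf₁ x hx)).add (hφ'x.mul (hf₂ x hx))).sub (hφx.mul (hf₂' x hx))
      |>.congr_deriv (by ring)
  have := intervalIntegral.integral_eq_sub_of_hasDerivAt hΨ (hT.sub hφG)
  rw [intervalIntegral.integral_sub hT hφG, hφc, hφ'c, hφd, hφ'd] at this
  simpa [sub_eq_zero] using this

theorem eq_zero_of_forall_integral_second_order_test_eq_zero
    {f₀ f₁ f₁' f₂ f₂' f₂'' : ℝ → ℝ} (hf₀ : ContinuousOn f₀ (Ioo a b))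
    (hf₁ : ∀ x ∈ Ioo a b, HasDerivAt f₁ (f₁' x) x) (hf₁' : ContinuousOn f₁' (Ioo a b))
    (hf₂ : ∀ x ∈ Ioo a b, HasDerivAt f₂ (f₂' x) x)
    (hf₂' : ∀ x ∈ Ioo a b, HasDerivAt f₂' (f₂'' x) x) (hf₂'' : ContinuousOn f₂'' (Ioo a b))
    (h : ∀ φ : ℝ → ℝ, ContDiff ℝ ∞ φ → HasCompactSupport φ → tsupport φ ⊆ Ioo a b →
      ∫ x in a..b, φ x * f₀ x + deriv φ x * f₁ x + deriv (deriv φ) x * f₂ x = 0) :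
    ∀ x ∈ Ioo a b, f₀ x - f₁' x + f₂'' x = 0 := by
  intro x hx
  have hG : ContinuousOn (fun x => f₀ x - f₁' x + f₂'' x) (Ioo a b) := (hf₀.sub hf₁').add hf₂''
  refine Measure.eqOn_open_of_ae_eq (μ := volume) ?_ isOpen_Ioo hG continuousOn_const hx
  refine (ae_restrict_iff' measurableSet_Ioo).2 <|
    isOpen_Ioo.ae_eq_zero_of_integral_contDiff_smul_eq_zero
      (hG.locallyIntegrableOn measurableSet_Ioo) fun φ hφ hcs hsupp => ?_
  obtain ⟨c, d, hac, hcd, hdb, hφcd⟩ :=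
    hcs.isCompact.exists_Ioo_subset_of_subset_Ioo hsupp (hx.1.trans hx.2)
  have hvanish : ∀ y ∉ Ioo c d, φ y = 0 ∧ deriv φ y = 0 ∧ deriv (deriv φ) y = 0 := by
    intro y hy
    have hy' : y ∉ tsupport φ := fun h => hy (hφcd h)
    exact ⟨image_eq_zero_of_notMem_tsupport hy', deriv_of_notMem_tsupport hy',
      deriv_of_notMem_tsupport fun h => hy' (tsupport_deriv_subset h)⟩
  have hT : Function.support
      (fun x => φ x * f₀ x + deriv φ x * f₁ x + deriv (deriv φ) x * f₂ x) ⊆ Ioc c d := by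
    refine (Function.support_subset_iff'.2 fun y hy => ?_).trans Ioo_subset_Ioc_self
    simp [hvanish y hy]
  have hφG : Function.support (fun x => φ x • (f₀ x - f₁' x + f₂'' x)) ⊆ Ioc c d :=
    (Function.support_smul_subset_left _ _).trans <|
      (subset_tsupport φ).trans <| hφcd.trans Ioo_subset_Ioc_self
  have hIcc : Icc c d ⊆ Ioo a b := Icc_subset_Ioo hac hdb
  have hends : c ∉ Ioo c d ∧ d ∉ Ioo c d := by simp
  rw [← intervalIntegral.integral_eq_integral_of_support_subset hφG, ← h φ hφ hcs hsupp,
    intervalIntegral.integral_eq_integral_of_support_subset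
      (hT.trans (Ioc_subset_Ioc hac.le hdb.le)),
    ← intervalIntegral.integral_eq_integral_of_support_subset hT]
  exact (integral_second_order_test_eq_integral_mul hcd.le (hφ.of_le ENat.LEInfty.out)
    (hvanish c hends.1).1 (hvanish c hends.1).2.1 (hvanish d hends.2).1
    (hvanish d hends.2).2.1 (hf₀.mono hIcc) (fun y hy => hf₁ y (hIcc hy)) (hf₁'.mono hIcc)
    (fun y hy => hf₂ y (hIcc hy)) (fun y hy => hf₂' y (hIcc hy)) (hf₂''.mono hIcc)).symm

theorem eq_zero_of_forall_integral_second_order_test_inner_eq_zero {E : Type*}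
    [NormedAddCommGroup E] [InnerProductSpace ℝ E] {f₀ f₁ f₁' f₂ f₂' f₂'' : ℝ → E}
    (hf₀ : ContinuousOn f₀ (Ioo a b))
    (hf₁ : ∀ x ∈ Ioo a b, HasDerivAt f₁ (f₁' x) x) (hf₁' : ContinuousOn f₁' (Ioo a b))
    (hf₂ : ∀ x ∈ Ioo a b, HasDerivAt f₂ (f₂' x) x)
    (hf₂' : ∀ x ∈ Ioo a b, HasDerivAt f₂' (f₂'' x) x) (hf₂'' : ContinuousOn f₂'' (Ioo a b))
    (h : ∀ η : ℝ → E, ContDiff ℝ ∞ η → HasCompactSupport η → tsupport η ⊆ Ioo a b →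
      ∫ x in a..b, ⟪f₀ x, η x⟫ + ⟪f₁ x, deriv η x⟫ + ⟪f₂ x, deriv (deriv η) x⟫ = 0) :
    ∀ x ∈ Ioo a b, f₀ x - f₁' x + f₂'' x = 0 := by
  intro x hx
  refine ext_inner_right ℝ fun v => ?_
  have hderiv : ∀ {g g' : ℝ → E}, (∀ y ∈ Ioo a b, HasDerivAt g (g' y) y) →
      ∀ y ∈ Ioo a b, HasDerivAt (fun y => ⟪g y, v⟫) ⟪g' y, v⟫ y := fun hg y hy => by
    simpa using (hg y hy).inner ℝ (hasDerivAt_const y v)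
  rw [inner_zero_left, inner_add_left, inner_sub_left]
  refine eq_zero_of_forall_integral_second_order_test_eq_zero (hf₀.inner continuousOn_const)
    (hderiv hf₁) (hf₁'.inner continuousOn_const) (hderiv hf₂) (hderiv hf₂')
    (hf₂''.inner continuousOn_const) (fun φ hφ hcs hsupp => ?_) x hx
  have hsmul : ∀ {ψ : ℝ → ℝ}, ContDiff ℝ ∞ ψ →
      deriv (fun y => ψ y • v) = fun y => deriv ψ y • v := fun hψ =>
    funext fun y => deriv_smul_const (hψ.differentiable (by simp) y) v
  have hφ' : ContDiff ℝ ∞ (deriv φ) := hφ.iterate_deriv 1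
  simpa [hsmul hφ, hsmul hφ', real_inner_smul_right, mul_comm] using
    h (fun y => φ y • v) (hφ.smul contDiff_const) hcs.smul_right
      ((tsupport_smul_subset_left _ _).trans hsupp)

end FundamentalLemma

section DifferentiationUnderIntegral

lemma ae_mem_Ioo_of_mem_uIoc {a b : ℝ} (hab : a ≤ b) : ∀ᵐ x, x ∈ uIoc a b → x ∈ Ioo a b := by
  filter_upwards [volume.ae_ne b] with x hxb hx
  rw [uIoc_of_le hab] at hx
  exact ⟨hx.1, hx.2.lt_of_ne hxb⟩

lemma aestronglyMeasurable_mul_of_continuousOn_Ioo {g w : ℝ → ℝ} {a b : ℝ} (hab : a ≤ b)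
    (hg : ContinuousOn g (Ioo a b)) (hw : IntervalIntegrable w volume a b) :
    AEStronglyMeasurable (fun x => g x * w x) (volume.restrict (uIoc a b)) := by
  refine AEStronglyMeasurable.mul ?_ hw.def'.aestronglyMeasurable
  rw [uIoc_of_le hab, ← Measure.restrict_congr_set Ioo_ae_eq_Ioc]
  exact hg.aestronglyMeasurable measurableSet_Ioo

variable {F : Type*} [NormedAddCommGroup F] [NormedSpace ℝ F]

lemma IsCompact.exists_bound_fderiv_add_smul_apply {Λ : F → ℝ} (hΛ : Continuous (fderiv ℝ Λ))
    {K K' : Set F} (hK : IsCompact K) (hK' : IsCompact K') :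
    ∃ M, ∀ x ∈ K, ∀ ε ∈ Metric.closedBall (0 : ℝ) 1, ∀ y ∈ K',
      ‖fderiv ℝ Λ (x + ε • y) y‖ ≤ M := by
  obtain ⟨M, hM⟩ := (hK.prod ((isCompact_closedBall 0 1).prod hK')).exists_bound_of_continuousOn
    (f := fun p : F × ℝ × F => fderiv ℝ Λ (p.1 + p.2.1 • p.2.2) p.2.2) (by fun_prop)
  exact ⟨M, fun x hx ε hε y hy => hM (x, ε, y) ⟨hx, hε, hy⟩⟩

theorem hasDerivAt_intervalIntegral_comp_add_smul_mul {Λ : F → ℝ} (hΛ : ContDiff ℝ 1 Λ)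
    {γ D : ℝ → F} {w : ℝ → ℝ} {a b : ℝ} (hab : a ≤ b) {K : Set F} (hK : IsCompact K)
    (hγK : MapsTo γ (Ioo a b) K) (hγ : ContinuousOn γ (Ioo a b)) (hD : ContinuousOn D (Icc a b))
    (hw : IntervalIntegrable w volume a b) :
    HasDerivAt (fun ε : ℝ => ∫ x in a..b, Λ (γ x + ε • D x) * w x)
      (∫ x in a..b, fderiv ℝ Λ (γ x) (D x) * w x) 0 := by
  have hΛ' := hΛ.continuous_fderiv one_ne_zero
  obtain ⟨M, hM⟩ :=
    hK.exists_bound_fderiv_add_smul_apply hΛ' (isCompact_Icc.image_of_continuousOn hD)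
  obtain ⟨M₀, hM₀⟩ := hK.exists_bound_of_continuousOn hΛ.continuous.continuousOn
  have hγD : ∀ ε : ℝ, ContinuousOn (fun x => γ x + ε • D x) (Ioo a b) := fun ε =>
    hγ.add ((hD.mono Ioo_subset_Icc_self).const_smul ε)
  have hderiv := intervalIntegral.hasDerivAt_integral_of_dominated_loc_of_deriv_le
    (F := fun ε x => Λ (γ x + ε • D x) * w x)
    (F' := fun ε x => fderiv ℝ Λ (γ x + ε • D x) (D x) * w x)
    (bound := fun x => M * ‖w x‖) (Metric.ball_mem_nhds 0 one_pos)
    (.of_forall fun ε => aestronglyMeasurable_mul_of_continuousOn_Ioo hab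
      (hΛ.continuous.comp_continuousOn (hγD ε)) hw)
    (hw.norm.const_mul M₀ |>.mono_fun' (aestronglyMeasurable_mul_of_continuousOn_Ioo hab
      (hΛ.continuous.comp_continuousOn (hγD 0)) hw) ?_)
    (aestronglyMeasurable_mul_of_continuousOn_Ioo hab
      ((hΛ'.comp_continuousOn (hγD 0)).clm_apply (hD.mono Ioo_subset_Icc_self)) hw)
    ?_ (hw.norm.const_mul _) (.of_forall fun x _ ε _ => ?_)
  · simpa using hderiv.2
  · refine (ae_restrict_iff' measurableSet_uIoc).2 <|
      (ae_mem_Ioo_of_mem_uIoc hab).mono fun x hx hxab => ?_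
    simp only [zero_smul, add_zero, norm_mul]
    exact mul_le_mul_of_nonneg_right (hM₀ _ (hγK (hx hxab))) (norm_nonneg _)
  · refine (ae_mem_Ioo_of_mem_uIoc hab).mono fun x hx hxab ε hε => ?_
    rw [norm_mul]
    gcongr
    exact hM _ (hγK (hx hxab)) ε (Metric.ball_subset_closedBall hε) _
      (mem_image_of_mem D (Ioo_subset_Icc_self (hx hxab)))
  · have hline : HasDerivAt (fun ε : ℝ => γ x + ε • D x) (D x) ε := by
      simpa using ((hasDerivAt_id ε).smul_const (D x)).const_add (γ x)
    exact ((hΛ.differentiable one_ne_zero _).hasFDerivAt.comp_hasDerivAt ε hline).mul_const _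

end DifferentiationUnderIntegral

section PartialGradient

variable {E F : Type*} [NormedAddCommGroup E] [InnerProductSpace ℝ E] [CompleteSpace E]
  [NormedAddCommGroup F] [NormedSpace ℝ F]

/-- With `I` the inclusion of the `i`-th argument, this is the paper's `∂ᵢL`. -/
noncomputable def partialGradient (L : F → ℝ) (I : E →L[ℝ] F) (p : F) : E :=
  (toDual ℝ E).symm ((fderiv ℝ L p).comp I)

lemma inner_partialGradient (L : F → ℝ) (I : E →L[ℝ] F) (p : F) (u : E) :
    ⟪partialGradient L I p, u⟫ = fderiv ℝ L p (I u) :=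
  toDual_symm_apply

lemma gradient_comp_eq_partialGradient {L : F → ℝ} {σ : E → F} {I : E →L[ℝ] F} {y : E}
    (hL : DifferentiableAt ℝ L (σ y)) (hσ : HasFDerivAt σ I y) :
    gradient (fun z => L (σ z)) y = partialGradient L I (σ y) := by
  rw [gradient, partialGradient, ← (hL.hasFDerivAt.comp y hσ).fderiv]
  rfl

lemma ContDiff.partialGradient {n : ℕ∞ω} {L : F → ℝ} (hL : ContDiff ℝ (n + 1) L)
    (I : E →L[ℝ] F) : ContDiff ℝ n (partialGradient L I) :=
  (toDual ℝ E).symm.contDiff.comp ((hL.fderiv_right le_rfl).clm_comp contDiff_const)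

variable (E) in
noncomputable def slot₂ : E →L[ℝ] ℝ × E × E × E :=
  .inr ℝ ℝ (E × E × E) ∘L .inl ℝ E (E × E)

variable (E) in
noncomputable def slot₃ : E →L[ℝ] ℝ × E × E × E :=
  .inr ℝ ℝ (E × E × E) ∘L .inr ℝ E (E × E) ∘L .inl ℝ E E

variable (E) in
noncomputable def slot₄ : E →L[ℝ] ℝ × E × E × E :=
  .inr ℝ ℝ (E × E × E) ∘L .inr ℝ E (E × E) ∘L .inr ℝ E E

variable {L : ℝ × E × E × E → ℝ}

lemma gradient_slot₂ (hL : Differentiable ℝ L) (s : ℝ) (x y z : E) :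
    gradient (fun x => L (s, x, y, z)) x = partialGradient L (slot₂ E) (s, x, y, z) :=
  gradient_comp_eq_partialGradient (hL _)
    ((hasFDerivAt_prodMk_right s _).comp x (hasFDerivAt_prodMk_left x (y, z)))

lemma gradient_slot₃ (hL : Differentiable ℝ L) (s : ℝ) (x y z : E) :
    gradient (fun y => L (s, x, y, z)) y = partialGradient L (slot₃ E) (s, x, y, z) :=
  gradient_comp_eq_partialGradient (hL _) ((hasFDerivAt_prodMk_right s _).comp y <|
    (hasFDerivAt_prodMk_right x _).comp y (hasFDerivAt_prodMk_left y z))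

lemma gradient_slot₄ (hL : Differentiable ℝ L) (s : ℝ) (x y z : E) :
    gradient (fun z => L (s, x, y, z)) z = partialGradient L (slot₄ E) (s, x, y, z) :=
  gradient_comp_eq_partialGradient (hL _) ((hasFDerivAt_prodMk_right s _).comp z <|
    (hasFDerivAt_prodMk_right x _).comp z (hasFDerivAt_prodMk_right y z))

lemma fderiv_apply_eq_sum_inner_partialGradient (L : ℝ × E × E × E → ℝ) (p : ℝ × E × E × E)
    (u₁ u₂ u₃ : E) :
    fderiv ℝ L p (0, u₁, u₂, u₃) = ⟪partialGradient L (slot₂ E) p, u₁⟫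
      + ⟪partialGradient L (slot₃ E) p, u₂⟫ + ⟪partialGradient L (slot₄ E) p, u₃⟫ := by
  have : ((0 : ℝ), u₁, u₂, u₃) = slot₂ E u₁ + slot₃ E u₂ + slot₄ E u₃ := by
    simp [slot₂, slot₃, slot₄]
  simp only [inner_partialGradient, this, map_add]

end PartialGradient

section Jet

variable {E : Type*} [NormedAddCommGroup E] [NormedSpace ℝ E]

noncomputable def jet (q : ℝ → E) (s : ℝ) : ℝ × E × E × E :=
  (s, q s, deriv q s, deriv (deriv q) s)

lemma ContDiffOn.jet_of_isOpen {q : ℝ → E} {U : Set ℝ} {n : ℕ} (hq : ContDiffOn ℝ (n + 2) q U)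
    (hU : IsOpen U) : ContDiffOn ℝ n (jet q) U := by
  have hq' : ContDiffOn ℝ (n + 1) (deriv q) U := hq.deriv_of_isOpen hU (by norm_cast)
  exact contDiffOn_id.prodMk <| (hq.of_le (by norm_cast; omega)).prodMk <|
    (hq'.of_le (by norm_cast; omega)).prodMk (hq'.deriv_of_isOpen hU le_rfl)

lemma exists_isCompact_mapsTo_jet {q : ℝ → E} {a b : ℝ} (hab : a < b)
    (hq : ContDiffOn ℝ 2 q (Icc a b)) : ∃ K, IsCompact K ∧ MapsTo (jet q) (Ioo a b) K := by
  have hU : UniqueDiffOn ℝ (Icc a b) := uniqueDiffOn_Icc hab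
  have hq' : ContDiffOn ℝ 1 (derivWithin q (Icc a b)) (Icc a b) := hq.derivWithin hU le_rfl
  refine ⟨(fun s => (s, q s, derivWithin q (Icc a b) s,
      derivWithin (derivWithin q (Icc a b)) (Icc a b) s)) '' Icc a b,
    isCompact_Icc.image_of_continuousOn <| continuousOn_id.prodMk <| hq.continuousOn.prodMk <|
      hq'.continuousOn.prodMk (hq'.continuousOn_derivWithin hU le_rfl),
    fun s hs => ⟨s, Ioo_subset_Icc_self hs, ?_⟩⟩
  -- inside, the derivatives of `q` are the one-sided ones, which are continuous up to the ends
  have hderiv : ∀ {f : ℝ → E} {x : ℝ}, x ∈ Ioo a b → derivWithin f (Icc a b) x = deriv f x :=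
    fun hx => derivWithin_of_mem_nhds (Icc_mem_nhds hx.1 hx.2)
  have hq'' : derivWithin q (Icc a b) =ᶠ[𝓝 s] deriv q :=
    eventually_of_mem (isOpen_Ioo.mem_nhds hs) fun x hx => hderiv hx
  simp only [jet, hderiv hs, hq''.deriv_eq]

end Jet

section Lagrangian

variable {E : Type*} [NormedAddCommGroup E] [InnerProductSpace ℝ E] [CompleteSpace E]

lemma hasDerivAt_integral_lagrangian_variation {L : ℝ × E × E × E → ℝ} (hL : ContDiff ℝ 1 L)
    {q h : ℝ → E} {w : ℝ → ℝ} {a b : ℝ} (hab : a < b) (hq : ContDiffOn ℝ 2 q (Icc a b))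
    (hh : ContDiff ℝ 2 h) (hw : IntervalIntegrable w volume a b) :
    HasDerivAt (fun ε : ℝ => ∫ θ in a..b, L (θ, q θ + ε • h θ, deriv q θ + ε • deriv h θ,
        deriv (deriv q) θ + ε • deriv (deriv h) θ) * w θ)
      (∫ θ in a..b, (⟪partialGradient L (slot₂ E) (jet q θ), h θ⟫
        + ⟪partialGradient L (slot₃ E) (jet q θ), deriv h θ⟫
        + ⟪partialGradient L (slot₄ E) (jet q θ), deriv (deriv h) θ⟫) * w θ) 0 := by
  obtain ⟨K, hK, hqK⟩ := exists_isCompact_mapsTo_jet hab hq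
  have hD : Continuous fun θ => ((0 : ℝ), h θ, deriv h θ, deriv (deriv h) θ) :=
    continuous_const.prodMk <| hh.continuous.prodMk <|
      (hh.continuous_deriv (by norm_num)).prodMk (hh.iterate_deriv' 0 2).continuous
  have := hasDerivAt_intervalIntegral_comp_add_smul_mul hL hab.le hK hqK
    ((hq.mono Ioo_subset_Icc_self).jet_of_isOpen isOpen_Ioo).continuousOn hD.continuousOn hw
  simpa [jet, fderiv_apply_eq_sum_inner_partialGradient] using this

theorem weighted_second_order_euler_lagrange {L : ℝ × E × E × E → ℝ} (hL : ContDiff ℝ 3 L)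
    {q : ℝ → E} {a b : ℝ} (hab : a < b) (hq : ContDiffOn ℝ 4 q (Icc a b)) {w w' w'' : ℝ → ℝ}
    (hw : IntervalIntegrable w volume a b) (hw' : ∀ x ∈ Ioo a b, HasDerivAt w (w' x) x)
    (hw'' : ∀ x ∈ Ioo a b, HasDerivAt w' (w'' x) x) (hw''c : ContinuousOn w'' (Ioo a b))
    (hstat : ∀ h : ℝ → E, ContDiff ℝ ∞ h → HasCompactSupport h → tsupport h ⊆ Ioo a b →
      HasDerivAt (fun ε : ℝ => ∫ θ in a..b, L (θ, q θ + ε • h θ, deriv q θ + ε • deriv h θ,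
        deriv (deriv q) θ + ε • deriv (deriv h) θ) * w θ) 0 0) :
    ∀ θ ∈ Ioo a b,
      w θ • (partialGradient L (slot₂ E) (jet q θ)
          - deriv (fun s => partialGradient L (slot₃ E) (jet q s)) θ
          + deriv (deriv fun s => partialGradient L (slot₄ E) (jet q s)) θ)
        - w' θ • (partialGradient L (slot₃ E) (jet q θ)
          - (2 : ℝ) • deriv (fun s => partialGradient L (slot₄ E) (jet q s)) θ)
        + w'' θ • partialGradient L (slot₄ E) (jet q θ) = 0 := by
  set A := fun s => partialGradient L (slot₂ E) (jet q s)
  set B := fun s => partialGradient L (slot₃ E) (jet q s)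
  set C := fun s => partialGradient L (slot₄ E) (jet q s)
  have hjet : ContDiffOn ℝ 2 (jet q) (Ioo a b) :=
    (hq.mono Ioo_subset_Icc_self).jet_of_isOpen isOpen_Ioo
  have hA : ContinuousOn A (Ioo a b) := ((hL.partialGradient _).comp_contDiffOn hjet).continuousOn
  have hB : ContDiffOn ℝ 2 B (Ioo a b) := (hL.partialGradient _).comp_contDiffOn hjet
  have hC : ContDiffOn ℝ 2 C (Ioo a b) := (hL.partialGradient _).comp_contDiffOn hjet
  have hC' : ContDiffOn ℝ 1 (deriv C) (Ioo a b) := hC.deriv_of_isOpen isOpen_Ioo le_rfl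
  have hasDerivAt_deriv : ∀ {f : ℝ → E}, ContDiffOn ℝ 1 f (Ioo a b) →
      ∀ x ∈ Ioo a b, HasDerivAt f (deriv f x) x := fun hf x hx =>
    ((hf.contDiffAt (isOpen_Ioo.mem_nhds hx)).differentiableAt one_ne_zero).hasDerivAt
  have hwc : ContinuousOn w (Ioo a b) := fun x hx => (hw' x hx).continuousAt.continuousWithinAt
  have hw'c : ContinuousOn w' (Ioo a b) := fun x hx => (hw'' x hx).continuousAt.continuousWithinAt
  intro θ hθ
  have hEL := eq_zero_of_forall_integral_second_order_test_inner_eq_zero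
    (f₀ := fun s => w s • A s) (f₁ := fun s => w s • B s)
    (f₁' := fun s => w s • deriv B s + w' s • B s) (f₂ := fun s => w s • C s)
    (f₂' := fun s => w s • deriv C s + w' s • C s)
    (f₂'' := fun s => (w s • deriv (deriv C) s + w' s • deriv C s)
      + (w' s • deriv C s + w'' s • C s))
    (hwc.smul hA) (fun x hx => (hw' x hx).smul (hasDerivAt_deriv (hB.of_le (by norm_num)) x hx))
    (hwc.smul (hB.continuousOn_deriv_of_isOpen isOpen_Ioo (by norm_num)) |>.add
      (hw'c.smul hB.continuousOn))
    (fun x hx => (hw' x hx).smul (hasDerivAt_deriv (hC.of_le (by norm_num)) x hx))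
    (fun x hx => ((hw' x hx).smul (hasDerivAt_deriv hC' x hx)).add
      ((hw'' x hx).smul (hasDerivAt_deriv (hC.of_le (by norm_num)) x hx)))
    ((hwc.smul (hC'.continuousOn_deriv_of_isOpen isOpen_Ioo le_rfl)).add
      (hw'c.smul hC'.continuousOn) |>.add ((hw'c.smul hC'.continuousOn).add
      (hw''c.smul hC.continuousOn)))
    (fun η hη hcs hsupp => ?_) θ hθ
  · linear_combination (norm := module) hEL
  · have hvar := hasDerivAt_integral_lagrangian_variation (hL.of_le (by norm_num)) hab
      (hq.of_le (by norm_num)) (hη.of_le ENat.LEInfty.out) hw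
    refine (intervalIntegral.integral_congr fun x _ => ?_).trans
      ((hstat η hη hcs hsupp).unique hvar).symm
    simp only [real_inner_smul_left]
    ring

end Lagrangian

lemma intervalIntegrable_const_sub_rpow {a t r : ℝ} (hr : -1 < r) :
    IntervalIntegrable (fun s => (t - s) ^ r) volume a t := by
  simpa using (intervalIntegral.intervalIntegrable_rpow' (a := t - a) (b := 0) hr).comp_sub_left t

lemma hasDerivAt_const_sub_rpow {t x : ℝ} (β : ℝ) (hx : x < t) :
    HasDerivAt (fun s => (t - s) ^ β) (-(β * (t - x) ^ (β - 1))) x :=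
  (Real.hasDerivAt_rpow_const (p := β) (Or.inl (sub_pos.2 hx).ne')).comp x
    ((hasDerivAt_id x).const_sub t) |>.congr_deriv (by simp)

theorem falva_second_order_euler_lagrange_general
    (n : ℕ) (a t α : ℝ) (hat : a < t) (hα0 : 0 < α)
    (L : ℝ × EuclideanSpace ℝ (Fin n) × EuclideanSpace ℝ (Fin n) ×
          EuclideanSpace ℝ (Fin n) → ℝ)
    (hL : ContDiff ℝ 4 L)
    (q : ℝ → EuclideanSpace ℝ (Fin n))
    (hq : ContDiffOn ℝ 4 q (Set.Icc a t))
    (hstat : ∀ h : ℝ → EuclideanSpace ℝ (Fin n),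
      ContDiff ℝ 4 h → h a = 0 → h t = 0 → deriv h a = 0 → deriv h t = 0 →
      HasDerivAt (fun ε : ℝ => (1 / Real.Gamma α) *
          ∫ θ in a..t,
            L (θ, q θ + ε • h θ, deriv q θ + ε • deriv h θ,
                deriv (deriv q) θ + ε • deriv (deriv h) θ) * (t - θ) ^ (α - 1))
        0 0) :
    ∀ θ ∈ Set.Ioo a t,
      gradient (fun y => L (θ, y, deriv q θ, deriv (deriv q) θ)) (q θ)
          - deriv (fun s =>
              gradient (fun v => L (s, q s, v, deriv (deriv q) s)) (deriv q s)) θ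
          + deriv (deriv (fun s =>
              gradient (fun w => L (s, q s, deriv q s, w)) (deriv (deriv q) s))) θ
        = ((1 - α) / (t - θ)) •
              (gradient (fun v => L (θ, q θ, v, deriv (deriv q) θ)) (deriv q θ)
                - (2 : ℝ) • deriv (fun s =>
                    gradient (fun w => L (s, q s, deriv q s, w)) (deriv (deriv q) s)) θ)
            - ((1 - α) * (2 - α) / (t - θ) ^ 2) •
                gradient (fun w => L (θ, q θ, deriv q θ, w)) (deriv (deriv q) θ) := by
  intro θ hθ
  have hLd : Differentiable ℝ L := hL.differentiable (by norm_num)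
  simp only [gradient_slot₂ hLd, gradient_slot₃ hLd, gradient_slot₄ hLd]
  have hw''c : ContinuousOn (fun s => (t - s) ^ (α - 1 - 1 - 1)) (Ioo a t) := fun x hx =>
    (hasDerivAt_const_sub_rpow _ hx.2).continuousAt.continuousWithinAt
  have hstat' : ∀ h : ℝ → EuclideanSpace ℝ (Fin n), ContDiff ℝ ∞ h → HasCompactSupport h →
      tsupport h ⊆ Ioo a t → HasDerivAt (fun ε : ℝ => ∫ θ in a..t,
        L (θ, q θ + ε • h θ, deriv q θ + ε • deriv h θ,
          deriv (deriv q) θ + ε • deriv (deriv h) θ) * (t - θ) ^ (α - 1)) 0 0 := by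
    intro h hh _ hsupp
    have hend : ∀ x ∉ Ioo a t, h x = 0 ∧ deriv h x = 0 := fun x hx =>
      ⟨image_eq_zero_of_notMem_tsupport (hx <| hsupp ·), deriv_of_notMem_tsupport (hx <| hsupp ·)⟩
    simpa [(Real.Gamma_pos_of_pos hα0).ne'] using (hstat h (hh.of_le ENat.LEInfty.out)
      (hend a (by simp)).1 (hend t (by simp)).1 (hend a (by simp)).2
      (hend t (by simp)).2).const_mul (Real.Gamma α)
  have hEL := weighted_second_order_euler_lagrange (hL.of_le (by norm_num)) hat hq
    (intervalIntegrable_const_sub_rpow (by linarith))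
    (fun x hx => hasDerivAt_const_sub_rpow (α - 1) hx.2)
    (fun x hx => ((hasDerivAt_const_sub_rpow (α - 1 - 1) hx.2).const_mul (α - 1)).neg)
    (by fun_prop) hstat' θ hθ
  have hr : 0 < t - θ := sub_pos.2 hθ.2
  rw [Real.rpow_sub_one hr.ne' (α - 1 - 1), Real.rpow_sub_one hr.ne' (α - 1)] at hEL
  refine smul_right_injective _ (Real.rpow_pos_of_pos hr (α - 1)).ne' ?_
  simp only [jet] at hEL
  -- otherwise `ring` expands `(t - θ) ^ 2` and cannot invert it
  generalize t - θ = r at hEL ⊢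
  linear_combination (norm := module) hEL

/-- **Euler–Lagrange equations for second-order FALVA problems.**
If `q` gives a stationary value to the second-order FALVA functional
`I²[q] = (1/Γ(α)) ∫_a^t L(θ, q, q', q'') (t-θ)^(α-1) dθ` (first variation vanishing
for every `C⁴` variation `h` with `h(a) = h(t) = 0` and `h'(a) = h'(t) = 0`),
then on `(a,t)`:
`∂₂L - d/dθ ∂₃L + d²/dθ² ∂₄L
  = ((1-α)/(t-θ))(∂₃L - 2 d/dθ ∂₄L) - ((1-α)(2-α)/(t-θ)²) ∂₄L`. -/
theorem falva_second_order_euler_lagrange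
    (n : ℕ) (hn : 1 ≤ n) (a t α : ℝ) (hat : a < t) (hα0 : 0 < α) (hα1 : α ≤ 1)
    (L : ℝ × EuclideanSpace ℝ (Fin n) × EuclideanSpace ℝ (Fin n) ×
          EuclideanSpace ℝ (Fin n) → ℝ)
    (hL : ContDiff ℝ 4 L)
    (q : ℝ → EuclideanSpace ℝ (Fin n))
    (hq : ContDiffOn ℝ 4 q (Set.Icc a t))
    (hstat : ∀ h : ℝ → EuclideanSpace ℝ (Fin n),
      ContDiff ℝ 4 h → h a = 0 → h t = 0 → deriv h a = 0 → deriv h t = 0 →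
      HasDerivAt (fun ε : ℝ => (1 / Real.Gamma α) *
          ∫ θ in a..t,
            L (θ, q θ + ε • h θ, deriv q θ + ε • deriv h θ,
                deriv (deriv q) θ + ε • deriv (deriv h) θ) * (t - θ) ^ (α - 1))
        0 0) :
    ∀ θ ∈ Set.Ioo a t,
      gradient (fun y => L (θ, y, deriv q θ, deriv (deriv q) θ)) (q θ)
          - deriv (fun s =>
              gradient (fun v => L (s, q s, v, deriv (deriv q) s)) (deriv q s)) θ
          + deriv (deriv (fun s =>
              gradient (fun w => L (s, q s, deriv q s, w)) (deriv (deriv q) s))) θ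
        = ((1 - α) / (t - θ)) •
              (gradient (fun v => L (θ, q θ, v, deriv (deriv q) θ)) (deriv q θ)
                - (2 : ℝ) • deriv (fun s =>
                    gradient (fun w => L (s, q s, deriv q s, w)) (deriv (deriv q) s)) θ)
            - ((1 - α) * (2 - α) / (t - θ) ^ 2) •
                gradient (fun w => L (θ, q θ, deriv q θ, w)) (deriv (deriv q) θ) :=
  falva_second_order_euler_lagrange_general n a t α hat hα0 L hL q hq hstat
end

section
/- Let n, r ≥ 1, let a < t be real numbers, let 0 < α ≤ 1, let L : ℝ × ℝⁿ × ℝʳ → ℝ and φ : ℝ × ℝⁿ × ℝʳ → ℝⁿ be of class C¹, and define the Hamiltonian H(θ, q, u, p) = L(θ, q, u)·(t−θ)^{α−1} + ⟨p, φ(θ, q, u)⟩ for θ ∈ (a,t). Let q, p : ℝ → ℝⁿ be of class C¹ on [a,t] and u : ℝ → ℝʳ be continuous on [a,t]. Suppose that for all C¹ functions h_q, h_p : ℝ → ℝⁿ with h_q(a) = h_q(t) = 0 and all continuous h_u : ℝ → ℝʳ, the function ε ↦ ∫_a^t [ H(θ, q(θ)+εh_q(θ), u(θ)+εh_u(θ),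 p(θ)+εh_p(θ)) − ⟨p(θ)+εh_p(θ), q'(θ)+εh_q'(θ)⟩ ] dθ has derivative 0 at ε = 0. Then for all θ ∈ (a,t): (i) q'(θ) = φ(θ, q(θ), u(θ)) (equivalently q'(θ) = ∂₄H(θ, q(θ), u(θ), p(θ))); (ii) p'(θ) = −∂₂H(θ, q(θ), u(θ), p(θ)); and (iii) ∂₃H(θ, q(θ), u(θ), p(θ)) = 0. -/
/-!
Differentiating the augmented functional under the integral sign gives its first variation
`∫ ⟪∂₂H, h_q⟫ + ⟪∂₃H, h_u⟫ + ⟪h_p, φ - q'⟫ - ⟪p, h_q'⟫`: the weight `(t - θ) ^ (α - 1)` is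
integrable because `α > 0`, and everything it multiplies is bounded on the compact set swept out
by the varied curves. Varying one of `q`, `p`, `u` at a time, integrating `⟪p, h_q'⟫` by parts
and applying the fundamental lemma of the calculus of variations on `(a, t)` yields the three
equations.
-/

open scoped RealInnerProductSpace Interval Topology
open MeasureTheory Set Function Metric InnerProductSpace

section Analysis

variable {E : Type*} [NormedAddCommGroup E] [InnerProductSpace ℝ E]

theorem eqOn_zero_of_forall_integral_inner_eq_zero {a b : ℝ} {g : ℝ → E}
    (hg : ContinuousOn g (Ioo a b))
    (h : ∀ ψ : ℝ → E, ContDiff ℝ 1 ψ → tsupport ψ ⊆ Ioo a b → ∫ θ in a..b, ⟪g θ, ψ θ⟫ = 0) :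
    EqOn g 0 (Ioo a b) := by
  intro θ₀ hθ₀
  set v := g θ₀
  have hcont : ContinuousOn (fun θ => ⟪v, g θ⟫) (Ioo a b) := continuousOn_const.inner hg
  have hae : ∀ᵐ θ, θ ∈ Ioo a b → ⟪v, g θ⟫ = 0 := by
    refine isOpen_Ioo.ae_eq_zero_of_integral_contDiff_smul_eq_zero
      (hcont.locallyIntegrableOn measurableSet_Ioo) fun ψ hψ _ hsupp => ?_
    calc ∫ θ, ψ θ • ⟪v, g θ⟫ = ∫ θ in a..b, ψ θ • ⟪v, g θ⟫ :=
          (intervalIntegral.integral_eq_integral_of_support_subset <|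
            (support_smul_subset_left _ _).trans <|
              (subset_tsupport ψ).trans <| hsupp.trans Ioo_subset_Ioc_self).symm
      _ = ∫ θ in a..b, ⟪g θ, ψ θ • v⟫ := by
          simp only [real_inner_smul_right, real_inner_comm, smul_eq_mul]
      _ = 0 := h _ ((hψ.of_le (by norm_num)).smul contDiff_const)
          ((tsupport_smul_subset_left _ _).trans hsupp)
  have := Measure.eqOn_open_of_ae_eq ((ae_restrict_iff' measurableSet_Ioo).2 hae) isOpen_Ioo
    hcont continuousOn_const hθ₀
  exact inner_self_eq_zero.mp this

theorem intervalIntegrable_sub_rpow {r : ℝ} (hr : -1 < r) (a b c : ℝ) :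
    IntervalIntegrable (fun θ => (c - θ) ^ r) volume a b := by
  simpa using
    (intervalIntegral.intervalIntegrable_rpow' hr (a := c - a) (b := c - b)).comp_sub_left c

theorem continuous_inner_of_tsupport_subset {α : Type*} [TopologicalSpace α] {s : Set α}
    (hs : IsOpen s) {g h : α → E} (hg : ContinuousOn g s) (hh : ContinuousOn h s)
    (hsupp : tsupport h ⊆ s) : Continuous fun x => ⟪g x, h x⟫ :=
  (hg.inner hh).continuous_of_tsupport_subset hs <|
    (closure_mono <| support_subset_iff'.2 fun x hx => by simp [notMem_support.1 hx]).trans hsupp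

theorem integral_inner_deriv_add_inner_eq_zero {a b : ℝ} (hab : a ≤ b) {p p' h : ℝ → E}
    (hp : ContinuousOn p (Icc a b)) (hpd : ∀ θ ∈ Ioo a b, HasDerivAt p (p' θ) θ)
    (hp' : ContinuousOn p' (Ioo a b)) (hh : ContDiff ℝ 1 h) (hsupp : tsupport h ⊆ Ioo a b) :
    ∫ θ in a..b, ⟪p θ, deriv h θ⟫ + ⟪p' θ, h θ⟫ = 0 := by
  have hzero : ∀ x ∉ Ioo a b, h x = 0 := fun x hx =>
    image_eq_zero_of_notMem_tsupport fun hx' => hx (hsupp hx')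
  rw [intervalIntegral.integral_eq_sub_of_hasDerivAt_of_le hab (hp.inner hh.continuous.continuousOn)
    (fun θ hθ => (hpd θ hθ).inner ℝ (hh.differentiable one_ne_zero θ).hasDerivAt)]
  · simp [hzero a (by simp), hzero b (by simp)]
  · exact ((continuous_inner_of_tsupport_subset isOpen_Ioo (hp.mono Ioo_subset_Icc_self)
      (hh.continuous_deriv le_rfl).continuousOn (tsupport_deriv_subset.trans hsupp)).add
      (continuous_inner_of_tsupport_subset isOpen_Ioo hp' hh.continuous.continuousOn
        hsupp)).intervalIntegrable a b

theorem fderiv_inner_sub_apply {Y : Type*} [NormedAddCommGroup Y] [NormedSpace ℝ Y] {f : Y → E}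
    (hf : Differentiable ℝ f) (z d : Y × E × E) :
    fderiv ℝ (fun z : Y × E × E => ⟪z.2.1, f z.1 - z.2.2⟫) z d =
      ⟪z.2.1, fderiv ℝ f z.1 d.1 - d.2.2⟫ + ⟪d.2.1, f z.1 - z.2.2⟫ := by
  have : HasFDerivAt (fun z : Y × E × E => ⟪z.2.1, f z.1 - z.2.2⟫) _ z :=
    hasFDerivAt_snd.fst.inner ℝ (((hf z.1).hasFDerivAt.comp z hasFDerivAt_fst).sub
      hasFDerivAt_snd.snd)
  simp [this.fderiv, fderivInnerCLM_apply]

theorem hasDerivAt_integral_smul_comp_add_smul {X F : Type*} [NormedAddCommGroup X]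
    [NormedSpace ℝ X] [NormedAddCommGroup F] [NormedSpace ℝ F] {K : X → F} (hK : ContDiff ℝ 1 K)
    {w : ℝ → ℝ} {a b : ℝ} (hw : IntervalIntegrable w volume a b) {x₀ v : ℝ → X}
    (hx₀ : ContinuousOn x₀ [[a, b]]) (hv : ContinuousOn v [[a, b]]) :
    HasDerivAt (fun ε : ℝ => ∫ θ in a..b, w θ • K (x₀ θ + ε • v θ))
      (∫ θ in a..b, w θ • fderiv ℝ K (x₀ θ) (v θ)) 0 := by
  have hline : ∀ ε : ℝ, ContinuousOn (fun θ => x₀ θ + ε • v θ) [[a, b]] := fun ε =>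
    hx₀.add (hv.const_smul ε)
  obtain ⟨M, hM⟩ : ∃ M, ∀ θ ∈ [[a, b]], ∀ ε ∈ closedBall (0 : ℝ) 1,
      ‖fderiv ℝ K (x₀ θ + ε • v θ) (v θ)‖ ≤ M := by
    have hfst : MapsTo Prod.fst ([[a, b]] ×ˢ closedBall (0 : ℝ) 1) [[a, b]] := fun z hz => hz.1
    have hc : ContinuousOn (fun z : ℝ × ℝ => fderiv ℝ K (x₀ z.1 + z.2 • v z.1) (v z.1))
        ([[a, b]] ×ˢ closedBall 0 1) :=
      ((hK.continuous_fderiv one_ne_zero).comp_continuousOn ((hx₀.comp continuousOn_fst hfst).add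
        (continuousOn_snd.smul (hv.comp continuousOn_fst hfst)))).clm_apply
        (hv.comp continuousOn_fst hfst)
    obtain ⟨M, hM⟩ :=
      (isCompact_uIcc.prod (isCompact_closedBall 0 1)).exists_bound_of_continuousOn hc
    exact ⟨M, fun θ hθ ε hε => hM (θ, ε) ⟨hθ, hε⟩⟩
  have hderiv : ∀ θ ε, HasDerivAt (fun ε : ℝ => w θ • K (x₀ θ + ε • v θ))
      (w θ • fderiv ℝ K (x₀ θ + ε • v θ) (v θ)) ε := fun θ ε => by
    have hl : HasDerivAt (fun ε : ℝ => x₀ θ + ε • v θ) (v θ) ε := by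
      simpa using ((hasDerivAt_id ε).smul_const (v θ)).const_add (x₀ θ)
    exact ((hK.differentiable one_ne_zero _).hasFDerivAt.comp_hasDerivAt ε hl).const_smul (w θ)
  have hmeas : ∀ ε : ℝ, AEStronglyMeasurable (fun θ => w θ • K (x₀ θ + ε • v θ))
      (volume.restrict (Ι a b)) := fun ε =>
    hw.def'.aestronglyMeasurable.smul <| ((hK.continuous.comp_continuousOn (hline ε)).mono
      uIoc_subset_uIcc).aestronglyMeasurable measurableSet_uIoc
  have hmeas' : AEStronglyMeasurable (fun θ => w θ • fderiv ℝ K (x₀ θ + (0 : ℝ) • v θ) (v θ))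
      (volume.restrict (Ι a b)) :=
    hw.def'.aestronglyMeasurable.smul <| ((((hK.continuous_fderiv one_ne_zero).comp_continuousOn
      (hline 0)).clm_apply hv).mono uIoc_subset_uIcc).aestronglyMeasurable measurableSet_uIoc
  have := (intervalIntegral.hasDerivAt_integral_of_dominated_loc_of_deriv_le
    (ball_mem_nhds 0 one_pos) (.of_forall hmeas)
    (hw.smul_continuousOn (hK.continuous.comp_continuousOn (hline 0))) hmeas'
    (ae_of_all _ fun θ hθ ε hε => ?_) (hw.norm.mul_const M)
    (ae_of_all _ fun θ _ ε _ => hderiv θ ε)).2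
  · simpa using this
  · rw [norm_smul]
    exact mul_le_mul_of_nonneg_left (hM θ (uIoc_subset_uIcc hθ) ε (ball_subset_closedBall hε))
      (norm_nonneg _)

end Analysis

section Hamiltonian

variable {E U : Type*} [NormedAddCommGroup E] [InnerProductSpace ℝ E] [NormedAddCommGroup U]
  [InnerProductSpace ℝ U] {L : ℝ × E × U → ℝ} {φ : ℝ × E × U → E}

/-- `s` stands for the value `(t - θ) ^ (α - 1)` of the weight at the time `θ = z.1`. -/
def hamiltonian (L : ℝ × E × U → ℝ) (φ : ℝ × E × U → E) (s : ℝ) (z : ℝ × E × U) (P : E) : ℝ :=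
  L z * s + ⟪P, φ z⟫

noncomputable def hamiltonianFDeriv (L : ℝ × E × U → ℝ) (φ : ℝ × E × U → E) (s : ℝ) (P : E)
    (z : ℝ × E × U) : ℝ × E × U →L[ℝ] ℝ :=
  s • fderiv ℝ L z + (innerSL ℝ P).comp (fderiv ℝ φ z)

theorem hasFDerivAt_hamiltonian (hL : Differentiable ℝ L) (hφ : Differentiable ℝ φ) (s : ℝ)
    (P : E) (z : ℝ × E × U) :
    HasFDerivAt (fun z => hamiltonian L φ s z P) (hamiltonianFDeriv L φ s P z) z :=
  ((hL z).hasFDerivAt.mul_const s).add ((innerSL ℝ P).hasFDerivAt.comp z (hφ z).hasFDerivAt)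

theorem gradient_hamiltonian_state [CompleteSpace E] (hL : Differentiable ℝ L)
    (hφ : Differentiable ℝ φ) (s θ : ℝ) (x : E) (v : U) (P : E) :
    gradient (fun x => hamiltonian L φ s (θ, x, v) P) x = (toDual ℝ E).symm
      ((hamiltonianFDeriv L φ s P (θ, x, v)).comp
        ((ContinuousLinearMap.inr ℝ ℝ (E × U)).comp (ContinuousLinearMap.inl ℝ E U))) :=
  ((hasFDerivAt_hamiltonian hL hφ s P _).comp x ((hasFDerivAt_prodMk_right θ (x, v)).comp x
    (hasFDerivAt_prodMk_left x v))).hasGradientAt.gradient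

theorem gradient_hamiltonian_control [CompleteSpace U] (hL : Differentiable ℝ L)
    (hφ : Differentiable ℝ φ) (s θ : ℝ) (x : E) (v : U) (P : E) :
    gradient (fun v => hamiltonian L φ s (θ, x, v) P) v = (toDual ℝ U).symm
      ((hamiltonianFDeriv L φ s P (θ, x, v)).comp
        ((ContinuousLinearMap.inr ℝ ℝ (E × U)).comp (ContinuousLinearMap.inr ℝ E U))) :=
  ((hasFDerivAt_hamiltonian hL hφ s P _).comp v ((hasFDerivAt_prodMk_right θ (x, v)).comp v
    (hasFDerivAt_prodMk_right x v))).hasGradientAt.gradient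

theorem continuousOn_hamiltonianFDeriv (hL : ContDiff ℝ 1 L) (hφ : ContDiff ℝ 1 φ) {s : Set ℝ}
    {w : ℝ → ℝ} {q p : ℝ → E} {u : ℝ → U} (hw : ContinuousOn w s) (hq : ContinuousOn q s)
    (hu : ContinuousOn u s) (hp : ContinuousOn p s) :
    ContinuousOn (fun θ => hamiltonianFDeriv L φ (w θ) (p θ) (θ, q θ, u θ)) s := by
  have hz : ContinuousOn (fun θ => (θ, q θ, u θ)) s := continuousOn_id.prodMk (hq.prodMk hu)
  exact (hw.smul ((hL.continuous_fderiv one_ne_zero).comp_continuousOn hz)).add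
    (((innerSL ℝ).continuous.comp_continuousOn hp).clm_comp
      ((hφ.continuous_fderiv one_ne_zero).comp_continuousOn hz))

/-- `h₁`, `h₂`, `h₃` vary `q`, `p`, `u`, and `q'` stands for the velocity of `q`. -/
noncomputable def firstVariation (L : ℝ × E × U → ℝ) (φ : ℝ × E × U → E) (w : ℝ → ℝ) (a b : ℝ)
    (q q' p : ℝ → E) (u : ℝ → U) (h₁ h₂ : ℝ → E) (h₃ : ℝ → U) : ℝ :=
  ∫ θ in a..b, hamiltonianFDeriv L φ (w θ) (p θ) (θ, q θ, u θ) (0, h₁ θ, h₃ θ)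
    + ⟪h₂ θ, φ (θ, q θ, u θ) - q' θ⟫ - ⟪p θ, deriv h₁ θ⟫

theorem hasDerivAt_integral_hamiltonian_sub_inner (hL : ContDiff ℝ 1 L) (hφ : ContDiff ℝ 1 φ)
    {w : ℝ → ℝ} {a b : ℝ} (hw : IntervalIntegrable w volume a b) {q q' p h₁ h₂ : ℝ → E}
    {u h₃ : ℝ → U} (hq : ContinuousOn q [[a, b]]) (hq' : ContinuousOn q' [[a, b]])
    (hp : ContinuousOn p [[a, b]]) (hu : ContinuousOn u [[a, b]]) (hh₁ : ContDiff ℝ 1 h₁)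
    (hh₂ : Continuous h₂) (hh₃ : Continuous h₃) :
    HasDerivAt (fun ε : ℝ => ∫ θ in a..b,
        hamiltonian L φ (w θ) (θ, q θ + ε • h₁ θ, u θ + ε • h₃ θ) (p θ + ε • h₂ θ)
          - ⟪p θ + ε • h₂ θ, q' θ + ε • deriv h₁ θ⟫)
      (firstVariation L φ w a b q q' p u h₁ h₂ h₃) 0 := by
  -- The weighted part `w • L` and the unweighted part `⟪P, φ y - Q⟫` are differentiated separately.
  set K : (ℝ × E × U) × E × E → ℝ := fun z => ⟪z.2.1, φ z.1 - z.2.2⟫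
  have hK : ContDiff ℝ 1 K :=
    contDiff_snd.fst.inner ℝ ((hφ.comp contDiff_fst).sub contDiff_snd.snd)
  have hz : ContinuousOn (fun θ => (θ, q θ, u θ)) [[a, b]] := continuousOn_id.prodMk (hq.prodMk hu)
  have hdz : ContinuousOn (fun θ => ((0 : ℝ), h₁ θ, h₃ θ)) [[a, b]] :=
    (continuous_const.prodMk (hh₁.continuous.prodMk hh₃)).continuousOn
  have hZ : ContinuousOn (fun θ => ((θ, q θ, u θ), p θ, q' θ)) [[a, b]] := hz.prodMk (hp.prodMk hq')
  have hdZ : ContinuousOn (fun θ => (((0 : ℝ), h₁ θ, h₃ θ), h₂ θ, deriv h₁ θ)) [[a, b]] :=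
    hdz.prodMk (hh₂.prodMk (hh₁.continuous_deriv le_rfl)).continuousOn
  have hA := hasDerivAt_integral_smul_comp_add_smul hL hw hz hdz
  have hB := hasDerivAt_integral_smul_comp_add_smul hK (intervalIntegrable_const (c := (1 : ℝ)))
    hZ hdZ
  refine ((hA.add hB).congr_deriv ?_).congr_of_eventuallyEq (.of_forall fun ε => ?_)
  · unfold firstVariation
    rw [← intervalIntegral.integral_add]
    · refine intervalIntegral.integral_congr fun θ _ => ?_
      simp only [K, fderiv_inner_sub_apply (hφ.differentiable one_ne_zero)]
      simp [hamiltonianFDeriv, inner_sub_right]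
      ring
    · exact hw.smul_continuousOn
        (((hL.continuous_fderiv one_ne_zero).comp_continuousOn hz).clm_apply hdz)
    · exact ((((hK.continuous_fderiv one_ne_zero).comp_continuousOn
        hZ).clm_apply hdZ).const_smul (1 : ℝ)).intervalIntegrable
  · dsimp only [Pi.add_apply]
    rw [← intervalIntegral.integral_add]
    · refine intervalIntegral.integral_congr fun θ _ => ?_
      simp [hamiltonian, K, inner_sub_right]
      ring
    · exact hw.smul_continuousOn (hL.continuous.comp_continuousOn (hz.add (hdz.const_smul ε)))
    · exact ((hK.continuous.comp_continuousOn
        (hZ.add (hdZ.const_smul ε))).const_smul (1 : ℝ)).intervalIntegrable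

variable {w : ℝ → ℝ} {a b : ℝ} {q q' p : ℝ → E} {u : ℝ → U}

/-- `deriv q` may be junk at the endpoints, so the first variation is taken with the one-sided
derivative, which is continuous on `[a, b]` and agrees with `deriv q` on `(a, b)`. -/
theorem firstVariation_eq_zero_of_hasDerivAt (hL : ContDiff ℝ 1 L) (hφ : ContDiff ℝ 1 φ)
    (hab : a < b) (hw : IntervalIntegrable w volume a b) (hq : ContDiffOn ℝ 1 q (Icc a b))
    (hp : ContinuousOn p (Icc a b)) (hu : ContinuousOn u (Icc a b)) {h₁ h₂ : ℝ → E} {h₃ : ℝ → U}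
    (hh₁ : ContDiff ℝ 1 h₁) (hh₂ : Continuous h₂) (hh₃ : Continuous h₃)
    (hJ : HasDerivAt (fun ε : ℝ => ∫ θ in a..b,
        hamiltonian L φ (w θ) (θ, q θ + ε • h₁ θ, u θ + ε • h₃ θ) (p θ + ε • h₂ θ)
          - ⟪p θ + ε • h₂ θ, deriv q θ + ε • deriv h₁ θ⟫) 0 0) :
    firstVariation L φ w a b q (derivWithin q (Icc a b)) p u h₁ h₂ h₃ = 0 := by
  have hIcc : [[a, b]] = Icc a b := uIcc_of_le hab.le
  refine ((hasDerivAt_integral_hamiltonian_sub_inner hL hφ hw (hIcc ▸ hq.continuousOn)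
    (hIcc ▸ hq.continuousOn_derivWithin (uniqueDiffOn_Icc hab) le_rfl) (hIcc ▸ hp) (hIcc ▸ hu)
    hh₁ hh₂ hh₃).congr_of_eventuallyEq (.of_forall fun ε =>
      intervalIntegral.integral_congr_Ioo_of_le hab.le fun θ hθ => ?_)).unique hJ
  simp only [derivWithin_of_mem_nhds (Icc_mem_nhds hθ.1 hθ.2)]

theorem state_equation_of_firstVariation_eq_zero (hφ : Continuous φ)
    (hq : ContinuousOn q (Ioo a b)) (hq' : ContinuousOn q' (Ioo a b))
    (hu : ContinuousOn u (Ioo a b))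
    (hvar : ∀ h : ℝ → E, ContDiff ℝ 1 h → firstVariation L φ w a b q q' p u 0 h 0 = 0) :
    EqOn q' (fun θ => φ (θ, q θ, u θ)) (Ioo a b) := fun θ hθ =>
  (sub_eq_zero.1 (eqOn_zero_of_forall_integral_inner_eq_zero
    ((hφ.comp_continuousOn (continuousOn_id.prodMk (hq.prodMk hu))).sub hq')
    (fun h hh _ => by
      rw [← hvar h hh]
      simp [firstVariation, Prod.mk_zero_zero, real_inner_comm]) hθ)).symm

theorem costate_equation_of_firstVariation_eq_zero [CompleteSpace E] (hL : ContDiff ℝ 1 L)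
    (hφ : ContDiff ℝ 1 φ) (hab : a ≤ b) (hw : ContinuousOn w (Ioo a b))
    (hq : ContinuousOn q (Ioo a b)) (hu : ContinuousOn u (Ioo a b))
    (hp : ContDiffOn ℝ 1 p (Icc a b))
    (hvar : ∀ h : ℝ → E, ContDiff ℝ 1 h → h a = 0 → h b = 0 →
      firstVariation L φ w a b q q' p u h 0 0 = 0) :
    EqOn (deriv p) (fun θ => -gradient (fun x => hamiltonian L φ (w θ) (θ, x, u θ) (p θ)) (q θ))
      (Ioo a b) := by
  set G := fun θ => gradient (fun x => hamiltonian L φ (w θ) (θ, x, u θ) (p θ)) (q θ)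
  have hG : ∀ θ, G θ = (toDual ℝ E).symm ((hamiltonianFDeriv L φ (w θ) (p θ) (θ, q θ, u θ)).comp
      ((ContinuousLinearMap.inr ℝ ℝ (E × U)).comp (ContinuousLinearMap.inl ℝ E U))) := fun θ =>
    gradient_hamiltonian_state (hL.differentiable one_ne_zero) (hφ.differentiable one_ne_zero) ..
  have hp₀ := hp.continuousOn.mono Ioo_subset_Icc_self
  have hGc : ContinuousOn G (Ioo a b) := by
    rw [funext hG]
    exact (toDual ℝ E).symm.continuous.comp_continuousOn
      ((continuousOn_hamiltonianFDeriv hL hφ hw hq hu hp₀).clm_comp continuousOn_const)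
  have hpd : ∀ θ ∈ Ioo a b, HasDerivAt p (deriv p θ) θ := fun θ hθ =>
    ((hp.differentiableOn one_ne_zero θ (Ioo_subset_Icc_self hθ)).differentiableAt
      (Icc_mem_nhds hθ.1 hθ.2)).hasDerivAt
  have hp' := (hp.mono Ioo_subset_Icc_self).continuousOn_deriv_of_isOpen isOpen_Ioo le_rfl
  intro θ hθ
  refine eq_neg_of_add_eq_zero_right ?_
  refine eqOn_zero_of_forall_integral_inner_eq_zero (hGc.add hp') (fun h hh hsupp => ?_) hθ
  have hsupp' : tsupport (deriv h) ⊆ Ioo a b := tsupport_deriv_subset.trans hsupp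
  have hh' : ContinuousOn (deriv h) (Ioo a b) := (hh.continuous_deriv le_rfl).continuousOn
  have hEL : ∫ θ in a..b, ⟪G θ, h θ⟫ - ⟪p θ, deriv h θ⟫ = 0 := by
    rw [← hvar h hh (image_eq_zero_of_notMem_tsupport fun ha => (hsupp ha).1.false)
      (image_eq_zero_of_notMem_tsupport fun hb => (hsupp hb).2.false)]
    simp [firstVariation, hG, toDual_symm_apply]
  calc ∫ θ in a..b, ⟪(G + deriv p) θ, h θ⟫
      = ∫ θ in a..b, (⟪G θ, h θ⟫ - ⟪p θ, deriv h θ⟫) + (⟪p θ, deriv h θ⟫ + ⟪deriv p θ, h θ⟫) := by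
        refine intervalIntegral.integral_congr fun θ _ => ?_
        simp only [Pi.add_apply, inner_add_left]
        ring
    _ = 0 := by
        rw [intervalIntegral.integral_add, hEL,
          integral_inner_deriv_add_inner_eq_zero hab hp.continuousOn hpd hp' hh hsupp, add_zero]
        · exact ((continuous_inner_of_tsupport_subset isOpen_Ioo hGc hh.continuous.continuousOn
            hsupp).sub (continuous_inner_of_tsupport_subset isOpen_Ioo hp₀ hh'
              hsupp')).intervalIntegrable a b
        · exact ((continuous_inner_of_tsupport_subset isOpen_Ioo hp₀ hh' hsupp').add
            (continuous_inner_of_tsupport_subset isOpen_Ioo hp' hh.continuous.continuousOn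
              hsupp)).intervalIntegrable a b

theorem gradient_control_eq_zero_of_firstVariation_eq_zero [CompleteSpace U] (hL : ContDiff ℝ 1 L)
    (hφ : ContDiff ℝ 1 φ) (hw : ContinuousOn w (Ioo a b)) (hq : ContinuousOn q (Ioo a b))
    (hu : ContinuousOn u (Ioo a b)) (hp : ContinuousOn p (Ioo a b))
    (hvar : ∀ h : ℝ → U, ContDiff ℝ 1 h → firstVariation L φ w a b q q' p u 0 0 h = 0) :
    EqOn (fun θ => gradient (fun v => hamiltonian L φ (w θ) (θ, q θ, v) (p θ)) (u θ)) 0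
      (Ioo a b) := by
  have hG := fun θ => gradient_hamiltonian_control (hL.differentiable one_ne_zero)
    (hφ.differentiable one_ne_zero) (w θ) θ (q θ) (u θ) (p θ)
  refine eqOn_zero_of_forall_integral_inner_eq_zero ?_ fun h hh _ => ?_
  · rw [funext hG]
    exact (toDual ℝ U).symm.continuous.comp_continuousOn
      ((continuousOn_hamiltonianFDeriv hL hφ hw hq hu hp).clm_comp continuousOn_const)
  · rw [← hvar h hh]
    simp [firstVariation, hG, toDual_symm_apply]

end Hamiltonian

theorem falva_weak_pontryagin_principle_general
    (n r : ℕ) (a t α : ℝ) (hat : a < t)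
    (hα0 : 0 < α)
    (L : ℝ × EuclideanSpace ℝ (Fin n) × EuclideanSpace ℝ (Fin r) → ℝ)
    (φ : ℝ × EuclideanSpace ℝ (Fin n) × EuclideanSpace ℝ (Fin r) →
      EuclideanSpace ℝ (Fin n))
    (hL : ContDiff ℝ 1 L) (hφ : ContDiff ℝ 1 φ)
    (H : ℝ → EuclideanSpace ℝ (Fin n) → EuclideanSpace ℝ (Fin r) →
      EuclideanSpace ℝ (Fin n) → ℝ)
    (hH : ∀ θ x u p, H θ x u p = L (θ, x, u) * (t - θ) ^ (α - 1) + ⟪p, φ (θ, x, u)⟫)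
    (q p : ℝ → EuclideanSpace ℝ (Fin n)) (u : ℝ → EuclideanSpace ℝ (Fin r))
    (hq : ContDiffOn ℝ 1 q (Set.Icc a t))
    (hp : ContDiffOn ℝ 1 p (Set.Icc a t))
    (hu : ContinuousOn u (Set.Icc a t))
    (hstat : ∀ (hq' hp' : ℝ → EuclideanSpace ℝ (Fin n))
        (hu' : ℝ → EuclideanSpace ℝ (Fin r)),
      ContDiff ℝ 1 hq' → ContDiff ℝ 1 hp' → Continuous hu' →
      hq' a = 0 → hq' t = 0 →
      HasDerivAt (fun ε : ℝ => ∫ θ in a..t,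
          (H θ (q θ + ε • hq' θ) (u θ + ε • hu' θ) (p θ + ε • hp' θ)
            - ⟪p θ + ε • hp' θ, deriv q θ + ε • deriv hq' θ⟫))
        0 0) :
    ∀ θ ∈ Set.Ioo a t,
      deriv q θ = φ (θ, q θ, u θ)
        ∧ deriv p θ = - gradient (fun x => H θ x (u θ) (p θ)) (q θ)
        ∧ gradient (fun v => H θ (q θ) v (p θ)) (u θ) = 0 := by
  obtain rfl : H = fun θ x v P => hamiltonian L φ ((t - θ) ^ (α - 1)) (θ, x, v) P :=
    funext fun θ => funext fun x => funext fun v => funext fun P => hH θ x v P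
  set w : ℝ → ℝ := fun θ => (t - θ) ^ (α - 1)
  have hw : ContinuousOn w (Ioo a t) :=
    ContinuousOn.rpow_const (by fun_prop) fun θ hθ => Or.inl (sub_ne_zero.2 hθ.2.ne')
  have hvar : ∀ h₁ h₂ h₃, ContDiff ℝ 1 h₁ → ContDiff ℝ 1 h₂ → ContDiff ℝ 1 h₃ → h₁ a = 0 →
      h₁ t = 0 → firstVariation L φ w a t q (derivWithin q (Icc a t)) p u h₁ h₂ h₃ = 0 :=
    fun h₁ h₂ h₃ hh₁ hh₂ hh₃ ha ht => firstVariation_eq_zero_of_hasDerivAt hL hφ hat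
      (intervalIntegrable_sub_rpow (by linarith) a t t) hq hp.continuousOn hu hh₁ hh₂.continuous
      hh₃.continuous (hstat h₁ h₂ h₃ hh₁ hh₂ hh₃.continuous ha ht)
  have hq₀ := hq.continuousOn.mono Ioo_subset_Icc_self
  have hu₀ := hu.mono Ioo_subset_Icc_self
  intro θ hθ
  refine ⟨?_, ?_, ?_⟩
  · rw [← derivWithin_of_mem_nhds (Icc_mem_nhds hθ.1 hθ.2)]
    exact state_equation_of_firstVariation_eq_zero hφ.continuous hq₀
      ((hq.continuousOn_derivWithin (uniqueDiffOn_Icc hat) le_rfl).mono Ioo_subset_Icc_self) hu₀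
      (fun h hh => hvar 0 h 0 contDiff_const hh contDiff_const rfl rfl) hθ
  · exact costate_equation_of_firstVariation_eq_zero hL hφ hat.le hw hq₀ hu₀ hp
      (fun h hh => hvar h 0 0 hh contDiff_const contDiff_const) hθ
  · exact gradient_control_eq_zero_of_firstVariation_eq_zero hL hφ hw hq₀ hu₀
      (hp.continuousOn.mono Ioo_subset_Icc_self)
      (fun h hh => hvar 0 0 h contDiff_const contDiff_const hh rfl rfl) hθ

/-- **Weak Pontryagin maximum principle for FALVA optimal control problems.**
With Hamiltonian `H(θ,x,u,p) = L(θ,x,u)(t-θ)^(α-1) + ⟨p, φ(θ,x,u)⟩`, if the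
augmented functional `ε ↦ ∫_a^t [H(θ, q+εh_q, u+εh_u, p+εh_p) - ⟨p+εh_p, q'+εh_q'⟩] dθ`
has vanishing derivative at `ε = 0` for all admissible variations
`(h_q, h_u, h_p)`, then on `(a,t)` the Hamiltonian system
`q' = φ(θ,q,u) (= ∂₄H)`, `p' = -∂₂H` and the stationary condition `∂₃H = 0` hold. -/
theorem falva_weak_pontryagin_principle
    (n r : ℕ) (hn : 1 ≤ n) (hr : 1 ≤ r) (a t α : ℝ) (hat : a < t)
    (hα0 : 0 < α) (hα1 : α ≤ 1)
    (L : ℝ × EuclideanSpace ℝ (Fin n) × EuclideanSpace ℝ (Fin r) → ℝ)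
    (φ : ℝ × EuclideanSpace ℝ (Fin n) × EuclideanSpace ℝ (Fin r) →
      EuclideanSpace ℝ (Fin n))
    (hL : ContDiff ℝ 1 L) (hφ : ContDiff ℝ 1 φ)
    (H : ℝ → EuclideanSpace ℝ (Fin n) → EuclideanSpace ℝ (Fin r) →
      EuclideanSpace ℝ (Fin n) → ℝ)
    (hH : ∀ θ x u p, H θ x u p = L (θ, x, u) * (t - θ) ^ (α - 1) + ⟪p, φ (θ, x, u)⟫)
    (q p : ℝ → EuclideanSpace ℝ (Fin n)) (u : ℝ → EuclideanSpace ℝ (Fin r))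
    (hq : ContDiffOn ℝ 1 q (Set.Icc a t))
    (hp : ContDiffOn ℝ 1 p (Set.Icc a t))
    (hu : ContinuousOn u (Set.Icc a t))
    (hstat : ∀ (hq' hp' : ℝ → EuclideanSpace ℝ (Fin n))
        (hu' : ℝ → EuclideanSpace ℝ (Fin r)),
      ContDiff ℝ 1 hq' → ContDiff ℝ 1 hp' → Continuous hu' →
      hq' a = 0 → hq' t = 0 →
      HasDerivAt (fun ε : ℝ => ∫ θ in a..t,
          (H θ (q θ + ε • hq' θ) (u θ + ε • hu' θ) (p θ + ε • hp' θ)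
            - ⟪p θ + ε • hp' θ, deriv q θ + ε • deriv hq' θ⟫))
        0 0) :
    ∀ θ ∈ Set.Ioo a t,
      deriv q θ = φ (θ, q θ, u θ)
        ∧ deriv p θ = - gradient (fun x => H θ x (u θ) (p θ)) (q θ)
        ∧ gradient (fun v => H θ (q θ) v (p θ)) (u θ) = 0 :=
  falva_weak_pontryagin_principle_general n r a t α hat hα0 L φ hL hφ H hH q p u hq hp hu hstat
end
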